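/- arXiv:1908.05057 — 5 statements merged into one kernel-verified Lean document; each statement's English description precedes it below -/
import Mathlib

section
/- Let (h,[.,.]) be a left Leibniz algebra over the reals, F : ℝ → ℝ a function, and P : h^p → ℝ a symmetric multilinear p-form which is invariant, i.e. Σ_{i=1}^p P(x_1,...,[y,x_i],...,x_p) = 0 for all y, x_1,...,x_p. Then the operation x ▷ y := exp(F(P(x,...,x)) ad_x)(y) satisfies the rack self-distributivity x ▷ (y ▷ z) = (x ▷ y) ▷ (x ▷ z). -/
/-!
Write `D = F(P(x,…,x)) • ad_x` and `A = exp D`, so that `x ▷ y = A y`. The left Leibniz identity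
says that `D` is a derivation of the bracket, and invariance of `P` says that `D` is an
infinitesimal symmetry of `P`. Along `t ↦ exp (t D)` both properties integrate (the relevant
curves have zero derivative), so `A` is a bracket automorphism and `P (A y,…,A y) = P (y,…,y)`.
Hence `ad_{A y} = A ad_y A⁻¹`, and
`(x ▷ y) ▷ (x ▷ z) = exp (F(P(y,…,y)) A ad_y A⁻¹) (A z) = A exp (F(P(y,…,y)) ad_y) z = x ▷ (y ▷ z)`.
-/

open NormedSpace

noncomputable def adOp {h : Type*} [NormedAddCommGroup h] [NormedSpace ℝ h]
    [FiniteDimensional ℝ h] (b : h →ₗ[ℝ] h →ₗ[ℝ] h) (x : h) : h →L[ℝ] h :=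
  LinearMap.toContinuousLinearMap (b x)

-- The multiplicativity lemmas for `NormedSpace.exp` are stated for normed `ℚ`-algebras.
noncomputable local instance {E : Type*} [NormedAddCommGroup E] [NormedSpace ℝ E] :
    NormedAlgebra ℚ (E →L[ℝ] E) :=
  .restrictScalars ℚ ℝ _

theorem MultilinearMap.continuous_of_finiteDimensional {𝕜 ι G : Type*} {E : ι → Type*}
    [NontriviallyNormedField 𝕜] [CompleteSpace 𝕜] [Fintype ι]
    [∀ i, NormedAddCommGroup (E i)] [∀ i, NormedSpace 𝕜 (E i)] [∀ i, FiniteDimensional 𝕜 (E i)]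
    [NormedAddCommGroup G] [NormedSpace 𝕜 G] (P : MultilinearMap 𝕜 E G) : Continuous P := by
  classical
  let e := fun i => Module.finBasis 𝕜 (E i)
  have expand : ⇑P = fun m => ∑ r : ∀ i, Fin (Module.finrank 𝕜 (E i)),
      (∏ i, (e i).repr (m i) (r i)) • P fun i => e i (r i) := by
    funext m
    conv_lhs => rw [← funext fun i => (e i).sum_repr (m i), P.map_sum]
    exact Fintype.sum_congr _ _ fun r => P.map_smul_univ _ _
  rw [expand]
  refine continuous_finsetSum _ fun r _ => .smul ?_ continuous_const
  exact continuous_finsetProd _ fun i _ =>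
    ((e i).coord (r i)).continuous_of_finiteDimensional.comp (continuous_apply i)

section ExpFlow

variable {E F G : Type*} [NormedAddCommGroup E] [NormedSpace ℝ E] [CompleteSpace E]
  [NormedAddCommGroup F] [NormedSpace ℝ F] [CompleteSpace F]
  [NormedAddCommGroup G] [NormedSpace ℝ G]

theorem hasDerivAt_exp_smul_apply (D : E →L[ℝ] E) (y : E) (t : ℝ) :
    HasDerivAt (fun s : ℝ => exp (s • D) y) (D (exp (t • D) y)) t := by
  simpa using (hasDerivAt_exp_smul_const' (𝕂 := ℝ) D t).clm_apply (hasDerivAt_const t y)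

theorem ContinuousMultilinearMap.map_exp_apply_of_sum_update_eq_zero {ι : Type*} [Fintype ι]
    [DecidableEq ι] (Q : ContinuousMultilinearMap ℝ (fun _ : ι => E) G) (D : E →L[ℝ] E)
    (hD : ∀ v, ∑ i, Q (Function.update v i (D (v i))) = 0) (v : ι → E) :
    Q (fun i => exp D (v i)) = Q v := by
  set g : ℝ → G := fun t => Q fun i => exp (t • D) (v i)
  have hg : ∀ t, HasDerivAt g 0 t := by
    intro t
    have hcurve := hasDerivAt_pi.mpr fun i => hasDerivAt_exp_smul_apply D (v i) t
    refine ((Q.hasFDerivAt _).comp_hasDerivAt t hcurve).congr_deriv ?_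
    rw [ContinuousMultilinearMap.linearDeriv_apply, hD]
  have hconst : g 1 = g 0 :=
    is_const_of_deriv_eq_zero (fun t => (hg t).differentiableAt) (fun t => (hg t).deriv) 1 0
  simpa [g] using hconst

variable [CompleteSpace G]

theorem exp_apply_apply_of_derivation (B : E →L[ℝ] F →L[ℝ] G)
    (DE : E →L[ℝ] E) (DF : F →L[ℝ] F) (DG : G →L[ℝ] G)
    (hD : ∀ v w, DG (B v w) = B (DE v) w + B v (DF w)) (v : E) (w : F) :
    exp DG (B v w) = B (exp DE v) (exp DF w) := by
  set φ : ℝ → G := fun t => exp (t • -DG) (B (exp (t • DE) v) (exp (t • DF) w))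
  have hφ : ∀ t, HasDerivAt φ 0 t := by
    intro t
    have hB := (B.hasFDerivAt.comp_hasDerivAt t (hasDerivAt_exp_smul_apply DE v t)).clm_apply
      (hasDerivAt_exp_smul_apply DF w t)
    refine ((hasDerivAt_exp_smul_const (-DG) t).clm_apply hB).congr_deriv ?_
    simp only [Function.comp_apply, ← hD, mul_apply_eq_comp, neg_apply, map_neg, neg_add_cancel]
  have hconst : φ 1 = φ 0 :=
    is_const_of_deriv_eq_zero (fun t => (hφ t).differentiableAt) (fun t => (hφ t).deriv) 1 0
  simp only [φ, one_smul, zero_smul, exp_zero, one_apply_eq_self] at hconst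
  rw [← hconst, ← mul_apply_eq_comp, ← exp_add_of_commute (.neg_right (.refl DG)),
    add_neg_cancel, exp_zero, one_apply_eq_self]

end ExpFlow

section LeibnizAlgebra

variable {h : Type*} [NormedAddCommGroup h] [NormedSpace ℝ h] [FiniteDimensional ℝ h]
  (b : h →ₗ[ℝ] h →ₗ[ℝ] h)

theorem exp_apply_bracket_of_derivation (D : h →L[ℝ] h)
    (hD : ∀ v w, D (b v w) = b (D v) w + b v (D w)) (v w : h) :
    exp D (b v w) = b (exp D v) (exp D w) :=
  have : CompleteSpace h := FiniteDimensional.complete ℝ h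
  exp_apply_apply_of_derivation
    (LinearMap.toContinuousLinearMap (LinearMap.toContinuousLinearMap.toLinearMap ∘ₗ b))
    D D D hD v w

theorem adOp_units_apply (u : (h →L[ℝ] h)ˣ)
    (hu : ∀ v w, u.val (b v w) = b (u.val v) (u.val w)) (y : h) :
    adOp b (u.val y) = u * adOp b y * ↑u⁻¹ := by
  ext w
  change b (u.val y) w = u.val (b y (u⁻¹.val w))
  rw [hu, ← mul_apply_eq_comp u.val, u.mul_inv, one_apply_eq_self]

end LeibnizAlgebra

theorem stmt_3_general {h : Type*} [NormedAddCommGroup h] [NormedSpace ℝ h] [FiniteDimensional ℝ h]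
    (b : h →ₗ[ℝ] h →ₗ[ℝ] h)
    (leibniz : ∀ u v w : h, b u (b v w) = b (b u v) w + b v (b u w))
    (F : ℝ → ℝ) (p : ℕ) (P : MultilinearMap ℝ (fun _ : Fin p => h) ℝ)
    (hinv : ∀ (y : h) (v : Fin p → h), ∑ i, P (Function.update v i (b y (v i))) = 0)
    (op : h → h → h)
    (hop : ∀ x y : h,
      op x y = NormedSpace.exp (F (P fun _ => x) • adOp b x) y) :
    ∀ x y z : h, op x (op y z) = op (op x y) (op x z) := by
  intro x y z
  have : CompleteSpace h := FiniteDimensional.complete ℝ h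
  set D := F (P fun _ => x) • adOp b x
  have hD_apply : ∀ v, D v = b (F (P fun _ => x) • x) v := fun v => by simp [D, adOp]
  have hD : ∀ v w, D (b v w) = b (D v) w + b v (D w) := fun v w => by
    simp only [hD_apply]
    exact leibniz _ _ _
  let A : (h →L[ℝ] h)ˣ := (isUnit_exp D).unit
  have hA : ∀ v w, A.val (b v w) = b (A.val v) (A.val w) := exp_apply_bracket_of_derivation b D hD
  have hPA : (P fun _ => A.val y) = P fun _ => y :=
    ContinuousMultilinearMap.map_exp_apply_of_sum_update_eq_zero
      ⟨P, P.continuous_of_finiteDimensional⟩ D (fun v => by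
        simp only [hD_apply]
        exact hinv _ v) _
  simp only [hop]
  change A.val _ = exp (F (P fun _ => A.val y) • adOp b (A.val y)) (A.val z)
  rw [hPA, adOp_units_apply b A hA y, ← smul_mul_assoc, ← mul_smul_comm, exp_units_conj,
    mul_apply_eq_comp, mul_apply_eq_comp, ← mul_apply_eq_comp A⁻¹.val, A.inv_mul,
    one_apply_eq_self]

/-- For a real finite-dimensional left Leibniz algebra `(h,b)`, `F : ℝ → ℝ` and an
invariant symmetric multilinear `p`-form `P`, the operation
`x ▷ y := exp (F (P (x,…,x)) • ad_x) y` is left self-distributive. -/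
theorem stmt_3 {h : Type*} [NormedAddCommGroup h] [NormedSpace ℝ h] [FiniteDimensional ℝ h]
    (b : h →ₗ[ℝ] h →ₗ[ℝ] h)
    (leibniz : ∀ u v w : h, b u (b v w) = b (b u v) w + b v (b u w))
    (F : ℝ → ℝ) (p : ℕ) (P : MultilinearMap ℝ (fun _ : Fin p => h) ℝ)
    (hsymm : ∀ (v : Fin p → h) (σ : Equiv.Perm (Fin p)), P (v ∘ σ) = P v)
    (hinv : ∀ (y : h) (v : Fin p → h), ∑ i, P (Function.update v i (b y (v i))) = 0)
    (op : h → h → h)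
    (hop : ∀ x y : h,
      op x y = NormedSpace.exp (F (P fun _ => x) • adOp b x) y) :
    ∀ x y z : h, op x (op y z) = op (op x y) (op x z) :=
  stmt_3_general b leibniz F p P hinv op hop
end

section
/- Let h be a left Leibniz algebra and exp(ad_x) the exponential of ad_x. Then for all x, y in h, exp(ad_x) ∘ exp(ad_y) ∘ exp(ad_x)^{-1} = exp(ad_{exp(ad_x)(y)}); consequently x ▷ y := exp(ad_x)(y) defines a rack structure on h (the canonical linear Lie rack structure). -/
/-! The left Leibniz identity says that `ad` maps the bracket to the commutator bracket:
`ad_{ad_x u} = ad_x ad_u - ad_u ad_x`. Hence `ad : h → End h` intertwines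
`ad_x` with the derivation `D = L_{ad_x} - R_{ad_x}` of `End h`, so `exp D ∘ ad = ad ∘ exp (ad_x)`.
As left and right multiplication commute, `exp D` is conjugation by `exp (ad_x)`, which gives
`exp (ad_x) ad_y exp (-ad_x) = ad_{exp (ad_x) y}`. Exponentiating this semiconjugacy yields the
conjugation identity, and evaluating it at `exp (ad_x) z` yields the rack identity. -/

open NormedSpace

section Exp

variable {𝕂 𝔸 F : Type*} [RCLike 𝕂] [NormedRing 𝔸] [NormedAlgebra 𝕂 𝔸] [CompleteSpace 𝔸]
  [NormedAddCommGroup F] [NormedSpace 𝕂 F] [CompleteSpace F]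

theorem exp_apply_eq_of_pow_apply_eq {X : F →L[𝕂] F} {v : F} {a : 𝔸} (φ : 𝔸 →L[𝕂] F)
    (h : ∀ n : ℕ, (X ^ n) v = φ (a ^ n)) : exp X v = φ (exp a) := by
  have hX := (exp_series_hasSum_exp' (𝕂 := 𝕂) X).mapL (ContinuousLinearMap.apply 𝕂 F v)
  have ha := (exp_series_hasSum_exp' (𝕂 := 𝕂) a).mapL φ
  simp only [ContinuousLinearMap.apply_apply, map_smul, h] at hX ha
  exact hX.unique ha

variable (𝕂) in
theorem exp_mul_sub_mul_flip_apply (a c : 𝔸) :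
    exp (ContinuousLinearMap.mul 𝕂 𝔸 a - (ContinuousLinearMap.mul 𝕂 𝔸).flip a) c =
      exp a * c * exp (-a) := by
  let +nondep : NormedAlgebra ℚ (𝔸 →L[𝕂] 𝔸) := .restrictScalars ℚ 𝕂 _
  set L := ContinuousLinearMap.mul 𝕂 𝔸 a
  set R := (ContinuousLinearMap.mul 𝕂 𝔸).flip a
  have hLR : Commute L (-R) := by
    refine Commute.neg_right (ContinuousLinearMap.ext fun d => ?_)
    simp [L, R, mul_assoc]
  have hL (d : 𝔸) : exp L d = exp a * d :=
    exp_apply_eq_of_pow_apply_eq ((ContinuousLinearMap.mul 𝕂 𝔸).flip d) fun n => by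
      induction n with
      | zero => simp
      | succ n ih => simp [pow_succ', ih, L, mul_assoc]
  have hR : exp (-R) c = c * exp (-a) :=
    exp_apply_eq_of_pow_apply_eq (ContinuousLinearMap.mul 𝕂 𝔸 c) fun n => by
      induction n with
      | zero => simp
      | succ n ih =>
        rw [pow_succ', mul_apply_eq_comp, ih]
        simp [R, pow_succ, mul_assoc]
  rw [sub_eq_add_neg, exp_add_of_commute hLR, mul_apply_eq_comp, hR, hL, mul_assoc]

end Exp

section LeibnizAlgebra

variable {h : Type*} [NormedAddCommGroup h] [NormedSpace ℝ h] [FiniteDimensional ℝ h]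
  {b : h →ₗ[ℝ] h →ₗ[ℝ] h}

theorem adOp_adOp_apply (leibniz : ∀ u v w : h, b u (b v w) = b (b u v) w + b v (b u w))
    (x u : h) : adOp b (adOp b x u) = adOp b x * adOp b u - adOp b u * adOp b x := by
  ext w
  simp [adOp, leibniz x u w]

theorem exp_adOp_mul_adOp_mul_exp_neg
    (leibniz : ∀ u v w : h, b u (b v w) = b (b u v) w + b v (b u w)) (x y : h) :
    exp (adOp b x) * adOp b y * exp (-adOp b x) = adOp b (exp (adOp b x) y) := by
  let ad : h →L[ℝ] h →L[ℝ] h :=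
    LinearMap.toContinuousLinearMap (LinearMap.toContinuousLinearMap.toLinearMap ∘ₗ b)
  rw [← exp_mul_sub_mul_flip_apply ℝ]
  refine exp_apply_eq_of_pow_apply_eq (ad.comp (ContinuousLinearMap.apply ℝ h y)) fun n => ?_
  induction n with
  | zero => simp [ad, adOp]
  | succ n ih =>
    rw [pow_succ', mul_apply_eq_comp, ih, pow_succ' (adOp b x)]
    change _ = adOp b (adOp b x ((adOp b x ^ n) y))
    rw [adOp_adOp_apply leibniz]
    rfl

end LeibnizAlgebra

/-- For a finite-dimensional real left Leibniz algebra,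
`exp (ad_x) ∘ exp (ad_y) ∘ exp (ad_x)⁻¹ = exp (ad_{exp (ad_x) y})` (the inverse of
`exp (ad_x)` being `exp (-ad_x)`); consequently `x ▷ y := exp (ad_x) y` is a rack
operation (the canonical linear Lie rack structure). -/
theorem stmt_5 {h : Type*} [NormedAddCommGroup h] [NormedSpace ℝ h] [FiniteDimensional ℝ h]
    (b : h →ₗ[ℝ] h →ₗ[ℝ] h)
    (leibniz : ∀ u v w : h, b u (b v w) = b (b u v) w + b v (b u w)) :
    (∀ x y : h,
      NormedSpace.exp (adOp b x) * NormedSpace.exp (adOp b y) *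
          NormedSpace.exp (-(adOp b x)) =
        NormedSpace.exp (adOp b (NormedSpace.exp (adOp b x) y))) ∧
    (∀ x : h, Function.Bijective fun y => NormedSpace.exp (adOp b x) y) ∧
    (∀ x y z : h,
      NormedSpace.exp (adOp b x) (NormedSpace.exp (adOp b y) z) =
        NormedSpace.exp (adOp b (NormedSpace.exp (adOp b x) y))
          (NormedSpace.exp (adOp b x) z)) := by
  let +nondep : NormedAlgebra ℚ (h →L[ℝ] h) := .restrictScalars ℚ ℝ _
  have exp_neg_mul_exp (A : h →L[ℝ] h) : exp (-A) * exp A = 1 := by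
    rw [← exp_add_of_commute (Commute.refl A).neg_left, neg_add_cancel, exp_zero]
  have exp_mul_exp_neg (A : h →L[ℝ] h) : exp A * exp (-A) = 1 := by
    simpa using exp_neg_mul_exp (-A)
  have semiconj_ad (x y : h) :
      SemiconjBy (exp (adOp b x)) (adOp b y) (adOp b (exp (adOp b x) y)) := by
    rw [SemiconjBy, ← exp_adOp_mul_adOp_mul_exp_neg leibniz, mul_assoc _ (exp _),
      exp_neg_mul_exp, mul_one]
  have semiconj_exp (x y : h) :
      SemiconjBy (exp (adOp b x)) (exp (adOp b y)) (exp (adOp b (exp (adOp b x) y))) :=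
    (semiconj_ad x y).exp_right
  refine ⟨fun x y => ?_, fun x => ?_, fun x y z => ?_⟩
  · rw [(semiconj_exp x y).eq, mul_assoc, exp_mul_exp_neg, mul_one]
  · exact ContinuousLinearMap.isUnit_iff_bijective.mp (isUnit_exp _)
  · exact DFunLike.congr_fun (semiconj_exp x y).eq z
end

section
/- If (A_{n,1})_{n≥1} defines an analytic linear Lie rack structure on V via x ▷ y = y + Σ A_{n,1}(x,...,x,y), then the bilinear map [x,y] := A_{1,1}(x,y) is a left Leibniz bracket, i.e. [x,[y,z]] = [[x,y],z] + [y,[x,z]] for all x,y,z. -/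
/-!
Write `x ▷ y = y + ∑ₙ A_{n+1,1}(x,…,x,y)` (`seriesOp A x y`). Homogeneity of `A_{n,1}` in
its first `n` slots turns `t ↦ (t • x) ▷ y` into a power series in `t` whose linear
coefficient is `[x, y]`, so `[x, y]` is its derivative at `t = 0`. Each map `u ▷ ·` is
linear, so differentiating `u ▷ ((t • y) ▷ z) = (t • (u ▷ y)) ▷ (u ▷ z)` in `t` shows that
`u ▷ ·` preserves the bracket; differentiating `(s • x) ▷ [y, z] = [(s • x) ▷ y, (s • x) ▷ z]`
in `s` then gives the Leibniz identity.
-/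

/-- `adiag A n x y = A_{n,1}(x,…,x,y)`: the diagonal evaluation of the `n+1`-multilinear
map `A n` on `n` copies of `x` and one `y`. -/
def adiag {V : Type*} [AddCommGroup V] [Module ℝ V]
    (A : (n : ℕ) → MultilinearMap ℝ (fun _ : Fin (n + 1) => V) V)
    (n : ℕ) (x y : V) : V :=
  A n (Fin.snoc (fun _ => x) y)

open Filter Topology

section PowerSeries

variable {𝕜 E : Type*} [NontriviallyNormedField 𝕜] [NormedAddCommGroup E] [NormedSpace 𝕜 E]
  {f : ℕ → E}

lemma summable_pow_smul_of_summable_pow_succ_smul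
    (h : ∀ t : 𝕜, Summable fun k => t ^ (k + 1) • f k) (t : 𝕜) :
    Summable fun k => t ^ k • f k := by
  rcases eq_or_ne t 0 with rfl | ht
  · exact summable_of_ne_finset_zero (s := {0}) fun k hk => by simp_all
  · simpa [smul_smul, pow_succ', ← mul_assoc, ht] using (h t).const_smul t⁻¹

lemma tendsto_tsum_pow_smul_nhds_zero [CompleteSpace E]
    (h : ∀ t : 𝕜, Summable fun k => t ^ k • f k) :
    Tendsto (fun t : 𝕜 => ∑' k, t ^ k • f k) (𝓝 0) (𝓝 (f 0)) := by
  obtain ⟨C, hC⟩ : BddAbove (Set.range fun k => ‖f k‖) := by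
    simpa using (h 1).tendsto_atTop_zero.norm.bddAbove_range
  have hf_le : ∀ k, ‖f k‖ ≤ C := fun k => hC ⟨k, rfl⟩
  have hbound : ∀ᶠ t : 𝕜 in 𝓝 0, ∀ k, ‖t ^ k • f k‖ ≤ C * (1 / 2) ^ k := by
    filter_upwards [Metric.closedBall_mem_nhds (0 : 𝕜) (by norm_num : (0 : ℝ) < 1 / 2)]
      with t ht k
    rw [mem_closedBall_zero_iff] at ht
    rw [norm_smul, norm_pow, mul_comm]
    exact mul_le_mul (hf_le k) (pow_le_pow_left₀ (norm_nonneg t) ht k) (by positivity)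
      ((norm_nonneg _).trans (hf_le 0))
  have := tendsto_tsum_of_dominated_convergence
    ((summable_geometric_of_lt_one (by norm_num) (by norm_num)).mul_left C)
    (fun k => ((continuous_pow k).tendsto 0).smul_const (f k)) hbound
  simpa [zero_pow_eq, ite_smul] using this

lemma hasDerivAt_tsum_pow_succ_smul [CompleteSpace E]
    (h : ∀ t : 𝕜, Summable fun k => t ^ (k + 1) • f k) :
    HasDerivAt (fun t : 𝕜 => ∑' k, t ^ (k + 1) • f k) (f 0) 0 := by
  have h' := summable_pow_smul_of_summable_pow_succ_smul h
  rw [hasDerivAt_iff_tendsto_slope]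
  refine ((tendsto_tsum_pow_smul_nhds_zero h').mono_left nhdsWithin_le_nhds).congr' ?_
  filter_upwards [self_mem_nhdsWithin] with t (ht : t ≠ 0)
  simp only [slope_def_module, sub_zero, zero_pow (Nat.succ_ne_zero _), zero_smul, tsum_zero]
  rw [← (h t).tsum_const_smul]
  simp [pow_succ', smul_smul, ht]

end PowerSeries

section Adiag

variable {V : Type*} [AddCommGroup V] [Module ℝ V]
  (A : (n : ℕ) → MultilinearMap ℝ (fun _ : Fin (n + 1) => V) V)

lemma adiag_eq_toLinearMap_last (n : ℕ) (x y : V) :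
    adiag A n x y = (A n).toLinearMap (Fin.snoc (fun _ => x) 0) (Fin.last n) y := by
  simp [adiag, Fin.update_snoc_last]

lemma adiag_add_right (n : ℕ) (x y y' : V) :
    adiag A n x (y + y') = adiag A n x y + adiag A n x y' := by
  simp only [adiag_eq_toLinearMap_last, map_add]

lemma adiag_smul_right (n : ℕ) (c : ℝ) (x y : V) :
    adiag A n x (c • y) = c • adiag A n x y := by
  simp only [adiag_eq_toLinearMap_last, map_smul]

lemma adiag_smul_left (n : ℕ) (c : ℝ) (x y : V) :
    adiag A n (c • x) y = c ^ n • adiag A n x y := by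
  have h : (Fin.snoc (fun _ => c • x) y : Fin (n + 1) → V) =
      fun i => (Fin.snoc (fun _ => c) 1 : Fin (n + 1) → ℝ) i • Fin.snoc (fun _ => x) y i := by
    ext i
    induction i using Fin.lastCases <;> simp
  rw [adiag, h, (A n).map_smul_univ, Fin.prod_univ_castSucc]
  simp [adiag]

lemma adiag_one_eq_toLinearMap_zero (x y : V) :
    adiag A 1 x y = (A 1).toLinearMap (Fin.snoc (fun _ => 0) y) 0 x := by
  rw [MultilinearMap.toLinearMap_apply, show (0 : Fin 2) = (0 : Fin 1).castSucc from rfl,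
    ← Fin.snoc_update, Function.update_eq_const_of_subsingleton]
  rfl

lemma adiag_one_add_left (x x' y : V) :
    adiag A 1 (x + x') y = adiag A 1 x y + adiag A 1 x' y := by
  simp only [adiag_one_eq_toLinearMap_zero, map_add]

lemma adiag_one_smul_left (c : ℝ) (x y : V) :
    adiag A 1 (c • x) y = c • adiag A 1 x y := by
  simp only [adiag_one_eq_toLinearMap_zero, map_smul]

def bracket : V →ₗ[ℝ] V →ₗ[ℝ] V :=
  LinearMap.mk₂ ℝ (adiag A 1) (adiag_one_add_left A) (adiag_one_smul_left A)
    (adiag_add_right A 1) (adiag_smul_right A 1)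

end Adiag

section SeriesOp

variable {V : Type*} [NormedAddCommGroup V] [NormedSpace ℝ V]
  (A : (n : ℕ) → MultilinearMap ℝ (fun _ : Fin (n + 1) => V) V)

noncomputable def seriesOp (x y : V) : V := y + ∑' n, adiag A (n + 1) x y

lemma seriesOp_zero_left (y : V) : seriesOp A 0 y = y := by
  have h (n : ℕ) : adiag A (n + 1) 0 y = 0 := by
    simpa using adiag_smul_left A (n + 1) 0 0 y
  simp [seriesOp, h]

lemma seriesOp_smul_left (t : ℝ) (x y : V) :
    seriesOp A (t • x) y = y + ∑' k, t ^ (k + 1) • adiag A (k + 1) x y := by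
  simp only [seriesOp, adiag_smul_left]

variable {A} (hconv : ∀ x y : V, Summable fun n => adiag A (n + 1) x y)
include hconv

lemma summable_pow_succ_smul_adiag (t : ℝ) (x y : V) :
    Summable fun k => t ^ (k + 1) • adiag A (k + 1) x y := by
  simpa only [adiag_smul_left] using hconv (t • x) y

lemma hasDerivAt_seriesOp_smul_left [CompleteSpace V] (x y : V) :
    HasDerivAt (fun t : ℝ => seriesOp A (t • x) y) (adiag A 1 x y) 0 := by
  simp only [seriesOp_smul_left]
  exact (hasDerivAt_tsum_pow_succ_smul
    fun t => summable_pow_succ_smul_adiag hconv t x y).const_add y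

noncomputable def seriesOpLinear (u : V) : V →ₗ[ℝ] V where
  toFun := seriesOp A u
  map_add' y y' := by
    simp only [seriesOp, adiag_add_right, (hconv u y).tsum_add (hconv u y')]
    abel
  map_smul' c y := by
    simp only [seriesOp, adiag_smul_right, (hconv u y).tsum_const_smul, smul_add,
      RingHom.id_apply]

lemma seriesOp_adiag_one [FiniteDimensional ℝ V]
    (hdist : ∀ x y z : V,
      seriesOp A x (seriesOp A y z) = seriesOp A (seriesOp A x y) (seriesOp A x z))
    (u y z : V) :
    seriesOp A u (adiag A 1 y z) = adiag A 1 (seriesOp A u y) (seriesOp A u z) := by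
  set φ := (seriesOpLinear hconv u).toContinuousLinearMap
  have hφ (w : V) : φ w = seriesOp A u w := rfl
  have hL : HasDerivAt (fun t : ℝ => φ (seriesOp A (t • y) z)) (φ (adiag A 1 y z)) 0 :=
    φ.hasFDerivAt.comp_hasDerivAt _ (hasDerivAt_seriesOp_smul_left hconv y z)
  have hR :
      HasDerivAt (fun t : ℝ => seriesOp A (φ (t • y)) (φ z)) (adiag A 1 (φ y) (φ z)) 0 := by
    simpa only [φ.map_smul] using hasDerivAt_seriesOp_smul_left hconv (φ y) (φ z)
  simp only [hφ, hdist u] at hL hR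
  exact hL.unique hR

end SeriesOp

theorem stmt_7_general {V : Type*} [NormedAddCommGroup V] [NormedSpace ℝ V] [FiniteDimensional ℝ V]
    (A : (n : ℕ) → MultilinearMap ℝ (fun _ : Fin (n + 1) => V) V)
    (hconv : ∀ x y : V, Summable fun n => adiag A (n + 1) x y)
    (op : V → V → V)
    (hop : ∀ x y : V, op x y = y + ∑' n : ℕ, adiag A (n + 1) x y)
    (hdist : ∀ x y z : V, op x (op y z) = op (op x y) (op x z)) :
    ∀ x y z : V,
      adiag A 1 x (adiag A 1 y z) =
        adiag A 1 (adiag A 1 x y) z + adiag A 1 y (adiag A 1 x z) := by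
  obtain rfl : op = seriesOp A := funext fun x => funext (hop x)
  intro x y z
  have hL := hasDerivAt_seriesOp_smul_left hconv x (adiag A 1 y z)
  have hR := (bracket A).toContinuousBilinearMap.hasDerivAt_of_bilinear
    (fun _ => hasDerivAt_seriesOp_smul_left hconv x y)
    (fun _ => hasDerivAt_seriesOp_smul_left hconv x z)
  simp only [LinearMap.toContinuousBilinearMap_apply, bracket, LinearMap.mk₂_apply, zero_smul,
    seriesOp_zero_left, ← seriesOp_adiag_one hconv hdist] at hR
  rw [hL.unique hR, add_comm]

/-- If `(A_{n,1})_{n ≥ 1}` defines an analytic linear Lie rack structure on `V` via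
`x ▷ y = y + Σ A_{n,1}(x,…,x,y)`, then `[x,y] := A_{1,1}(x,y)` is a left Leibniz bracket. -/
theorem stmt_7 {V : Type*} [NormedAddCommGroup V] [NormedSpace ℝ V] [FiniteDimensional ℝ V]
    (A : (n : ℕ) → MultilinearMap ℝ (fun _ : Fin (n + 1) => V) V)
    (hA0 : ∀ v : Fin 1 → V, A 0 v = v 0)
    (hsymm : ∀ (n : ℕ) (x : Fin n → V) (y : V) (σ : Equiv.Perm (Fin n)),
      A n (Fin.snoc (x ∘ σ) y) = A n (Fin.snoc x y))
    (hconv : ∀ x y : V, Summable fun n => adiag A (n + 1) x y)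
    (op : V → V → V)
    (hop : ∀ x y : V, op x y = y + ∑' n : ℕ, adiag A (n + 1) x y)
    (hdist : ∀ x y z : V, op x (op y z) = op (op x y) (op x z)) :
    ∀ x y z : V,
      adiag A 1 x (adiag A 1 y z) =
        adiag A 1 (adiag A 1 x y) z + adiag A 1 y (adiag A 1 x z) :=
  stmt_7_general A hconv op hop hdist
end

section
/- Let h be a left Leibniz algebra, ⟨.,.⟩ a scalar product on h, a_j, b_j ∈ [h,h]^⊥ ∩ Z(h)^⊥, z_j ∈ Z(h), and f_j : ℝ → ℝ with f_j(0)=0 for j=1,...,k. Then x ▷ y := exp(ad_x)(y) + Σ_j ⟨y,b_j⟩ f_j(⟨x,a_j⟩) z_j satisfies the left self-distributivity x ▷ (y ▷ z) = (x ▷ y) ▷ (x ▷ z), defining a linear Lie rack operation pointed at 0. -/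
open NormedSpace
open scoped Nat InnerProductSpace

namespace ContinuousLinearMap

variable {𝕜 M N : Type*} [RCLike 𝕜]
  [NormedAddCommGroup M] [NormedSpace 𝕜 M] [CompleteSpace M]
  [NormedAddCommGroup N] [NormedSpace 𝕜 N] [CompleteSpace N]

theorem hasSum_exp_apply (T : M →L[𝕜] M) (v : M) :
    HasSum (fun n : ℕ => (n !⁻¹ : 𝕜) • (T ^ n) v) (exp T v) :=
  (exp_series_hasSum_exp' (𝕂 := 𝕜) T).mapL (apply 𝕜 M v)

theorem semiconj_exp (F : M →L[𝕜] N) {S : M →L[𝕜] M} {S' : N →L[𝕜] N}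
    (h : Function.Semiconj F S S') : Function.Semiconj F ⇑(exp S) ⇑(exp S') := fun v => by
  have hpow (n : ℕ) : F ((S ^ n) v) = (S' ^ n) (F v) := by
    simpa only [FunLike.coe_pow_eq_iterate] using h.iterate_right n v
  refine ((hasSum_exp_apply S v).mapL F).unique ?_
  simpa only [map_smul, hpow] using hasSum_exp_apply S' (F v)

theorem exp_apply_of_apply_eq_zero {T : M →L[𝕜] M} {v : M} (hv : T v = 0) : exp T v = v := by
  have hsemi : Function.Semiconj (toSpanSingleton 𝕜 v) ⇑(0 : 𝕜 →L[𝕜] 𝕜) T := fun c => by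
    simp [hv]
  simpa [exp_zero] using (semiconj_exp _ hsemi 1).symm

theorem inner_exp_apply_of_inner_apply_eq_zero {E : Type*} [NormedAddCommGroup E]
    [InnerProductSpace 𝕜 E] [CompleteSpace E] {T : E →L[𝕜] E} {v : E}
    (hv : ∀ w, ⟪v, T w⟫_𝕜 = 0) (y : E) : ⟪v, exp T y⟫_𝕜 = ⟪v, y⟫_𝕜 := by
  have hsemi : Function.Semiconj (innerSL 𝕜 v) T ⇑(0 : 𝕜 →L[𝕜] 𝕜) := fun w => by simp [hv]
  simpa [exp_zero] using semiconj_exp _ hsemi y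

section BanachAlgebra

variable {A : Type*} [NormedRing A] [NormedAlgebra 𝕜 A] [CompleteSpace A]

theorem exp_mul_apply (a c : A) : exp (mul 𝕜 A a) c = exp a * c :=
  (hasSum_exp_apply _ c).unique <| by
    simpa only [FunLike.coe_pow_eq_iterate, show ⇑(mul 𝕜 A a) = (a * ·) from rfl,
      mul_left_iterate, smul_mul_assoc] using
      (exp_series_hasSum_exp' (𝕂 := 𝕜) a).mul_right c

theorem exp_flip_mul_apply (a c : A) : exp ((mul 𝕜 A).flip a) c = c * exp a :=
  (hasSum_exp_apply _ c).unique <| by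
    simpa only [FunLike.coe_pow_eq_iterate, show ⇑((mul 𝕜 A).flip a) = (· * a) from rfl,
      mul_right_iterate, mul_smul_comm] using (exp_series_hasSum_exp' (𝕂 := 𝕜) a).mul_left c

theorem exp_mul_sub_flip_mul_apply (a c : A) :
    exp (mul 𝕜 A a - (mul 𝕜 A).flip a) c = exp a * c * exp (-a) := by
  let : NormedAlgebra ℚ (A →L[𝕜] A) := .restrictScalars ℚ 𝕜 _
  have hcomm : Commute (mul 𝕜 A a) (-(mul 𝕜 A).flip a) := by
    ext c; simp [mul_assoc]
  rw [sub_eq_add_neg, exp_add_of_commute hcomm, mul_apply_eq_comp, ← map_neg, exp_flip_mul_apply,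
    exp_mul_apply, mul_assoc]

end BanachAlgebra

end ContinuousLinearMap

def leibnizCenter {R L : Type*} [CommRing R] [AddCommGroup L] [Module R L]
    (b : L →ₗ[R] L →ₗ[R] L) : Submodule R L where
  carrier := {z | ∀ x, b z x = 0 ∧ b x z = 0}
  zero_mem' x := by simp
  add_mem' hz hw x := by simp [(hz x).1, (hz x).2, (hw x).1, (hw x).2]
  smul_mem' c z hz x := by simp [(hz x).1, (hz x).2]

section LeibnizAlgebra

open ContinuousLinearMap

variable {h : Type*} [NormedAddCommGroup h] [NormedSpace ℝ h] [FiniteDimensional ℝ h]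
  (b : h →ₗ[ℝ] h →ₗ[ℝ] h)

noncomputable def adCLM : h →L[ℝ] h →L[ℝ] h :=
  LinearMap.toContinuousLinearMap (LinearMap.toContinuousLinearMap.toLinearMap ∘ₗ b)

theorem adCLM_apply (x : h) : adCLM b x = adOp b x := rfl

@[simp]
theorem adOp_apply (x y : h) : adOp b x y = b x y := rfl

theorem adOp_add_of_mem_leibnizCenter {c : h} (hc : c ∈ leibnizCenter b) (x : h) :
    adOp b (x + c) = adOp b x := by
  ext y; simp [(hc y).1]

theorem exp_adOp_apply_of_mem_leibnizCenter {c : h} (hc : c ∈ leibnizCenter b) (x : h) :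
    exp (adOp b x) c = c :=
  exp_apply_of_apply_eq_zero (by simpa using (hc x).2)

variable {b}
variable (hb : ∀ u v w : h, b u (b v w) = b (b u v) w + b v (b u w))
include hb

theorem adOp_apply_apply (x y : h) :
    adOp b (b x y) = adOp b x * adOp b y - adOp b y * adOp b x := by
  ext w; simp [hb x y w]

theorem adOp_exp_adOp_apply (x y : h) :
    adOp b (exp (adOp b x) y) = exp (adOp b x) * adOp b y * exp (-adOp b x) := by
  have hsemi : Function.Semiconj (adCLM b) (adOp b x)
      ⇑(mul ℝ _ (adOp b x) - (mul ℝ _).flip (adOp b x)) := fun y => by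
    simp [adCLM_apply, adOp_apply_apply hb]
  rw [← adCLM_apply, semiconj_exp _ hsemi y, adCLM_apply, exp_mul_sub_flip_mul_apply]

theorem exp_adOp_exp_adOp_apply (x y z : h) :
    exp (adOp b (exp (adOp b x) y)) (exp (adOp b x) z) = exp (adOp b x) (exp (adOp b y) z) := by
  let : NormedAlgebra ℚ (h →L[ℝ] h) := .restrictScalars ℚ ℝ _
  have hsemi : SemiconjBy (exp (adOp b x)) (adOp b y) (adOp b (exp (adOp b x) y)) := by
    rw [SemiconjBy, adOp_exp_adOp_apply hb, mul_assoc, ← exp_add_of_commute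
      (Commute.refl (adOp b x)).neg_left, neg_add_cancel, exp_zero, mul_one]
  simpa only [mul_apply_eq_comp] using (DFunLike.congr_fun hsemi.exp_right z).symm

end LeibnizAlgebra

section Rack

open ContinuousLinearMap

variable {h : Type*} [NormedAddCommGroup h] [InnerProductSpace ℝ h]
  {b : h →ₗ[ℝ] h →ₗ[ℝ] h} {k : ℕ} (av bv zv : Fin k → h) (f : Fin k → ℝ → ℝ)

def centralTerm (x y : h) : h := ∑ j, (⟪y, bv j⟫_ℝ * f j ⟪x, av j⟫_ℝ) • zv j

variable {av bv zv f}

theorem centralTerm_mem_leibnizCenter (hzv : ∀ j, zv j ∈ leibnizCenter b) (x y : h) :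
    centralTerm av bv zv f x y ∈ leibnizCenter b :=
  Submodule.sum_mem _ fun j _ => Submodule.smul_mem _ _ (hzv j)

variable [FiniteDimensional ℝ h]

variable (av bv zv f) (b) in
noncomputable def leibnizRackOp (x y : h) : h :=
  exp (adOp b x) y + centralTerm av bv zv f x y

theorem inner_leibnizRackOp_left (hzv : ∀ j, zv j ∈ leibnizCenter b) {v : h}
    (hv : (∀ x y, ⟪b x y, v⟫_ℝ = 0) ∧ ∀ z ∈ leibnizCenter b, ⟪z, v⟫_ℝ = 0) (x y : h) :
    ⟪leibnizRackOp b av bv zv f x y, v⟫_ℝ = ⟪y, v⟫_ℝ := by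
  have hexp : ⟪v, exp (adOp b x) y⟫_ℝ = ⟪v, y⟫_ℝ :=
    inner_exp_apply_of_inner_apply_eq_zero (fun w => by rw [real_inner_comm]; exact hv.1 x w) y
  rw [leibnizRackOp, inner_add_left, real_inner_comm, hexp, real_inner_comm,
    hv.2 _ (centralTerm_mem_leibnizCenter hzv x y), add_zero]

theorem centralTerm_leibnizRackOp_right (hzv : ∀ j, zv j ∈ leibnizCenter b)
    (hbv : ∀ j, (∀ x y, ⟪b x y, bv j⟫_ℝ = 0) ∧ ∀ z ∈ leibnizCenter b, ⟪z, bv j⟫_ℝ = 0)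
    (x y z : h) :
    centralTerm av bv zv f x (leibnizRackOp b av bv zv f y z) = centralTerm av bv zv f x z := by
  simp only [centralTerm, inner_leibnizRackOp_left hzv (hbv _)]

theorem centralTerm_leibnizRackOp (hzv : ∀ j, zv j ∈ leibnizCenter b)
    (hav : ∀ j, (∀ x y, ⟪b x y, av j⟫_ℝ = 0) ∧ ∀ z ∈ leibnizCenter b, ⟪z, av j⟫_ℝ = 0)
    (hbv : ∀ j, (∀ x y, ⟪b x y, bv j⟫_ℝ = 0) ∧ ∀ z ∈ leibnizCenter b, ⟪z, bv j⟫_ℝ = 0)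
    (x y z : h) :
    centralTerm av bv zv f (leibnizRackOp b av bv zv f x y) (leibnizRackOp b av bv zv f x z) =
      centralTerm av bv zv f y z := by
  simp only [centralTerm, inner_leibnizRackOp_left hzv (hav _),
    inner_leibnizRackOp_left hzv (hbv _)]

theorem leibnizRackOp_leibnizRackOp (hb : ∀ u v w : h, b u (b v w) = b (b u v) w + b v (b u w))
    (hzv : ∀ j, zv j ∈ leibnizCenter b)
    (hav : ∀ j, (∀ x y, ⟪b x y, av j⟫_ℝ = 0) ∧ ∀ z ∈ leibnizCenter b, ⟪z, av j⟫_ℝ = 0)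
    (hbv : ∀ j, (∀ x y, ⟪b x y, bv j⟫_ℝ = 0) ∧ ∀ z ∈ leibnizCenter b, ⟪z, bv j⟫_ℝ = 0)
    (x y z : h) :
    leibnizRackOp b av bv zv f x (leibnizRackOp b av bv zv f y z) =
      leibnizRackOp b av bv zv f (leibnizRackOp b av bv zv f x y)
        (leibnizRackOp b av bv zv f x z) := by
  set op := leibnizRackOp b av bv zv f
  set S := centralTerm av bv zv f
  have hop (x y : h) : op x y = exp (adOp b x) y + S x y := rfl
  have hS (x y : h) : S x y ∈ leibnizCenter b := centralTerm_mem_leibnizCenter hzv x y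
  have hS_right : S x (op y z) = S x z := centralTerm_leibnizRackOp_right hzv hbv x y z
  have hS_op : S (op x y) (op x z) = S y z := centralTerm_leibnizRackOp hzv hav hbv x y z
  calc op x (op y z)
      = exp (adOp b x) (exp (adOp b y) z) + S y z + S x z := by
        rw [hop x, hS_right, hop y, map_add, exp_adOp_apply_of_mem_leibnizCenter b (hS y z)]
    _ = exp (adOp b (exp (adOp b x) y)) (exp (adOp b x) z) + S x z + S y z := by
        rw [exp_adOp_exp_adOp_apply hb]; abel
    _ = op (op x y) (op x z) := by
        rw [hop (op x y), hS_op, hop x y, adOp_add_of_mem_leibnizCenter b (hS x y), hop x z,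
          map_add, exp_adOp_apply_of_mem_leibnizCenter b (hS x z)]

theorem leibnizRackOp_zero_right (x : h) : leibnizRackOp b av bv zv f x 0 = 0 := by
  simp [leibnizRackOp, centralTerm]

theorem leibnizRackOp_zero_left (hf : ∀ j, f j 0 = 0) (y : h) :
    leibnizRackOp b av bv zv f 0 y = y := by
  simp [leibnizRackOp, centralTerm, hf, adOp, exp_zero]

end Rack

/-- Let `h` be a left Leibniz algebra with a scalar product, `aⱼ, bⱼ ∈ [h,h]^⊥ ∩ Z(h)^⊥`,
`zⱼ ∈ Z(h)`, and `fⱼ : ℝ → ℝ` with `fⱼ(0) = 0`. Then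
`x ▷ y := exp (ad_x) y + Σⱼ ⟨y,bⱼ⟩ fⱼ(⟨x,aⱼ⟩) zⱼ` is left self-distributive and pointed
at `0`, hence a linear Lie rack operation. -/
theorem stmt_14 {h : Type*} [NormedAddCommGroup h] [InnerProductSpace ℝ h]
    [FiniteDimensional ℝ h]
    (b : h →ₗ[ℝ] h →ₗ[ℝ] h)
    (leibniz : ∀ u v w : h, b u (b v w) = b (b u v) w + b v (b u w))
    (k : ℕ) (av bv zv : Fin k → h) (f : Fin k → ℝ → ℝ)
    (hzv : ∀ (j : Fin k) (x : h), b (zv j) x = 0 ∧ b x (zv j) = 0)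
    (hav : ∀ j : Fin k, (∀ x y : h, (inner ℝ (b x y) (av j) : ℝ) = 0) ∧
      (∀ z : h, (∀ x : h, b z x = 0 ∧ b x z = 0) → (inner ℝ z (av j) : ℝ) = 0))
    (hbv : ∀ j : Fin k, (∀ x y : h, (inner ℝ (b x y) (bv j) : ℝ) = 0) ∧
      (∀ z : h, (∀ x : h, b z x = 0 ∧ b x z = 0) → (inner ℝ z (bv j) : ℝ) = 0))
    (hf : ∀ j : Fin k, f j 0 = 0)
    (op : h → h → h)
    (hop : ∀ x y : h, op x y = (NormedSpace.expSeries ℝ (h →L[ℝ] h)).sum (adOp b x) y +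
      ∑ j : Fin k, ((inner ℝ y (bv j) : ℝ) * f j (inner ℝ x (av j) : ℝ)) • zv j) :
    (∀ x y z : h, op x (op y z) = op (op x y) (op x z)) ∧
      (∀ x : h, op x 0 = 0) ∧ (∀ y : h, op 0 y = y) := by
  have hop' : op = leibnizRackOp b av bv zv f := by
    ext x y
    rw [hop, leibnizRackOp, centralTerm, exp_eq_expSeries_sum ℝ]
  subst hop'
  exact ⟨leibnizRackOp_leibnizRackOp leibniz hzv hav hbv, leibnizRackOp_zero_right,
    leibnizRackOp_zero_left hf⟩
end

section
/- Define C_{2n+1} and C_{2n} by the recursion expressing an analytic linear Lie rack on sl₂(ℝ): if A_{r,1}(x,y) = C_r · ad_x^r(y)/r! with C_0 = C_1 = 1, C_2 = 1, then self-distributivity at orders (p=2n, q=1) forces (C_{2n}/(2n)!) = (1/2)[Σ_{r=0}^{n−1} C_{2r+1}C_{2(n−r)−1}/((2r+1)!(2(n−r)−1)!) − Σ_{r=1}^{n−1} C_{2r}C_{2(n−r)}/((2r)!(2(n−r))!)]. Equivalently, setting U_r = C_r/r!, one has U_{2n} = (1/2)[Σ_{r=0}^{n−1} U_{2r+1}U_{2(n−r)−1}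 − Σ_{r=1}^{n−1} U_{2r}U_{2(n−r)}] for all n ≥ 1. -/
/-!
Take an `sl₂`-triple `(h, e, f)` and evaluate the order-`(2n, 1)` equation at `x = h / 2`,
`y = f`, `z = e`. Since `ad x` acts on `e`, `f`, `h` by `1`, `-1`, `0`, the left side vanishes
and the right side is `-(∑ₖ (-1)ᵏ Uₖ U₂ₙ₋ₖ) • h`, so the alternating convolution vanishes.
Splitting it into even and odd indices, the two extreme even terms `U₀ U₂ₙ` and `U₂ₙ U₀`
both equal `U₂ₙ`, which gives the formula.
-/

open LieAlgebra

theorem Module.End.pow_apply_of_apply_eq_smul {R M : Type*} [CommSemiring R] [AddCommMonoid M]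
    [Module R M] {φ : Module.End R M} {μ : R} {v : M} (hv : φ v = μ • v) (k : ℕ) :
    (φ ^ k) v = μ ^ k • v := by
  induction k with
  | zero => simp
  | succ k ih => rw [pow_succ', Module.End.mul_apply, ih, map_smul, hv, smul_smul, pow_succ]

theorem Finset.sum_range_two_mul_add_one_neg_one_pow_mul {R : Type*} [CommRing R] (b : ℕ → R)
    (n : ℕ) :
    ∑ k ∈ range (2 * n + 1), (-1) ^ k * b k =
      ∑ r ∈ range (n + 1), b (2 * r) - ∑ r ∈ range n, b (2 * r + 1) := by
  induction n with
  | zero => simp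
  | succ n ih =>
    rw [show 2 * (n + 1) + 1 = 2 * n + 1 + 1 + 1 by ring, sum_range_succ, sum_range_succ, ih,
      sum_range_succ (fun r => b (2 * r)) (n + 1),
      sum_range_succ (fun r => b (2 * r + 1)) n, (Odd.neg_one_pow ⟨n, rfl⟩ : (-1 : R) ^ _ = _),
      (Even.neg_one_pow ⟨n + 1, by ring⟩ : (-1 : R) ^ (2 * n + 1 + 1) = 1),
      show 2 * (n + 1) = 2 * n + 1 + 1 by ring]
    ring

/-- The self-distributivity equation of order `(m, 1)` for the analytic rack
`x ▷ y = ∑ₖ U k • (ad x)ᵏ y` on `L`. -/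
def SelfDistribAtOrder (K L : Type*) [CommRing K] [LieRing L] [LieAlgebra K L] (U : ℕ → K)
    (m : ℕ) : Prop :=
  ∀ x y z : L, U m • (ad K L x ^ m) ⁅y, z⁆ =
    ∑ k ∈ Finset.range (m + 1), ⁅U k • (ad K L x ^ k) y, U (m - k) • (ad K L x ^ (m - k)) z⁆

namespace IsSl2Triple

variable {K L : Type*} [Field K] [NeZero (2 : K)] [LieRing L] [LieAlgebra K L] {h e f : L}

theorem sum_neg_one_pow_mul_eq_zero (t : IsSl2Triple h e f) {U : ℕ → K} {m : ℕ} (hm : m ≠ 0)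
    (hU : SelfDistribAtOrder K L U m) :
    ∑ k ∈ Finset.range (m + 1), (-1) ^ k * (U k * U (m - k)) = 0 := by
  set x : L := (2⁻¹ : K) • h
  have hxe : ad K L x e = (1 : K) • e := by
    rw [ad_apply, smul_lie, t.lie_h_e_smul K, smul_smul, inv_mul_cancel₀ two_ne_zero]
  have hxf : ad K L x f = (-1 : K) • f := by
    rw [ad_apply, smul_lie, t.lie_lie_smul_f K, smul_neg, smul_smul, inv_mul_cancel₀ two_ne_zero,
      neg_one_smul, one_smul]
  have hxh : ad K L x h = (0 : K) • h := by rw [ad_apply, smul_lie, lie_self, smul_zero, zero_smul]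
  have key := hU x f e
  simp only [← lie_skew f e, t.lie_e_f, map_neg, Module.End.pow_apply_of_apply_eq_smul hxe,
    Module.End.pow_apply_of_apply_eq_smul hxf, Module.End.pow_apply_of_apply_eq_smul hxh,
    zero_pow hm, one_pow, one_smul, zero_smul, neg_zero, smul_zero, smul_lie, lie_smul,
    smul_smul, smul_neg, Finset.sum_neg_distrib, zero_eq_neg, ← Finset.sum_smul] at key
  rw [← (smul_eq_zero.mp key).resolve_right t.h_ne_zero]
  exact Finset.sum_congr rfl fun k _ ↦ by ring

end IsSl2Triple

namespace LieAlgebra.SpecialLinear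

variable {n R : Type*} [Fintype n] [DecidableEq n] [CommRing R]

theorem isSl2Triple_single [Nontrivial R] {i j : n} (hij : i ≠ j) :
    IsSl2Triple (singleSubSingle i j (1 : R)) (single i j hij 1) (single j i hij.symm 1) where
  h_ne_zero h := by
    simpa [Matrix.single_apply, hij.symm] using congrArg (fun A : sl n R => A.val i i) h
  lie_e_f := by
    ext : 1
    simp [Ring.lie_def, Matrix.single_mul_single_same]
  lie_h_e_nsmul := by
    ext : 1
    simp [Ring.lie_def, sub_mul, mul_sub, Matrix.single_mul_single_same,
      Matrix.single_mul_single_of_ne, hij.symm, two_nsmul]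
  lie_h_f_nsmul := by
    ext : 1
    simp [Ring.lie_def, sub_mul, mul_sub, Matrix.single_mul_single_same,
      Matrix.single_mul_single_of_ne, hij, two_nsmul]
    abel

end LieAlgebra.SpecialLinear

theorem stmt_19_general (U : ℕ → ℝ) (hU0 : U 0 = 1)
    (heq : ∀ n : ℕ, 1 ≤ n → ∀ x y z : SpecialLinear.sl (Fin 2) ℝ,
      U (2 * n) • ((ad ℝ _ x) ^ (2 * n)) ⁅y, z⁆ =
        ∑ k ∈ Finset.range (2 * n + 1),
          ⁅U k • ((ad ℝ _ x) ^ k) y, U (2 * n - k) • ((ad ℝ _ x) ^ (2 * n - k)) z⁆) :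
    ∀ n : ℕ, 1 ≤ n →
      U (2 * n) = (1 / 2) *
        ((∑ r ∈ Finset.range n, U (2 * r + 1) * U (2 * (n - r) - 1)) -
          ∑ r ∈ Finset.Ico 1 n, U (2 * r) * U (2 * (n - r))) := by
  intro n hn
  have ht := SpecialLinear.isSl2Triple_single (R := ℝ) (zero_ne_one' (Fin 2))
  have hsum := ht.sum_neg_one_pow_mul_eq_zero (by omega) (heq n hn)
  rw [Finset.sum_range_two_mul_add_one_neg_one_pow_mul, Finset.sum_range_succ,
    Finset.range_eq_Ico, Finset.sum_eq_sum_Ico_succ_bot hn] at hsum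
  have heven : ∑ r ∈ Finset.Ico 1 n, U (2 * r) * U (2 * n - 2 * r) =
      ∑ r ∈ Finset.Ico 1 n, U (2 * r) * U (2 * (n - r)) :=
    Finset.sum_congr rfl fun r _ ↦ by rw [Nat.mul_sub]
  have hodd : ∑ r ∈ Finset.Ico 0 n, U (2 * r + 1) * U (2 * n - (2 * r + 1)) =
      ∑ r ∈ Finset.range n, U (2 * r + 1) * U (2 * (n - r) - 1) :=
    Finset.sum_congr (Finset.range_eq_Ico n).symm fun r _ ↦ by rw [Nat.mul_sub, Nat.sub_add_eq]
  simp only [mul_zero, Nat.sub_zero, Nat.sub_self, hU0, one_mul, mul_one, heven, hodd] at hsum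
  linarith

/-- Suppose `A_{r,1}(x,y) = C_r · ad_x^r(y)/r!` (i.e. `A_{r,1}(x,y) = U_r • ad_x^r(y)` with
`U_r = C_r/r!`) defines an analytic linear Lie rack on `sl₂(ℝ)`, with
`U_0 = U_1 = 1`, `U_2 = 1/2`. The self-distributivity structure equations at orders
`(p = 2n, q = 1)` force
`U_{2n} = (1/2)[Σ_{r=0}^{n−1} U_{2r+1} U_{2(n−r)−1} − Σ_{r=1}^{n−1} U_{2r} U_{2(n−r)}]`
for all `n ≥ 1`. -/
theorem stmt_19 (U : ℕ → ℝ) (hU0 : U 0 = 1) (hU1 : U 1 = 1) (hU2 : U 2 = 1 / 2)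
    (heq : ∀ n : ℕ, 1 ≤ n → ∀ x y z : SpecialLinear.sl (Fin 2) ℝ,
      U (2 * n) • ((ad ℝ _ x) ^ (2 * n)) ⁅y, z⁆ =
        ∑ k ∈ Finset.range (2 * n + 1),
          ⁅U k • ((ad ℝ _ x) ^ k) y, U (2 * n - k) • ((ad ℝ _ x) ^ (2 * n - k)) z⁆) :
    ∀ n : ℕ, 1 ≤ n →
      U (2 * n) = (1 / 2) *
        ((∑ r ∈ Finset.range n, U (2 * r + 1) * U (2 * (n - r) - 1)) -
          ∑ r ∈ Finset.Ico 1 n, U (2 * r) * U (2 * (n - r))) :=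
  stmt_19_general U hU0 heq
end
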